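/- Let Q be an acyclic quiver with full commutativity relations presenting the incidence algebra A of a finite poset, and let I, J be intervals of Q. Then there exists an epimorphism of A-modules V_J → V_I if and only if I_0 is a down-set in J_0. -/

import Mathlib

set_option linter.unusedSectionVars false

open scoped Classical

/-- A persistence module over the poset `P`: a functor `P → Vect_k`.
(This models pointwise finite modules over the incidence algebra `A = kQ/ρ` of the poset.) -/
structure PersMod (k P : Type) [Field k] [PartialOrder P] where
  V : P → Type
  [acg : ∀ a, AddCommGroup (V a)]
  [mod : ∀ a, Module k (V a)]
  map : ∀ {a b : P}, a ≤ b → (V a →ₗ[k] V b)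
  map_id : ∀ a : P, map (le_refl a) = LinearMap.id
  map_comp : ∀ {a b c : P} (h₁ : a ≤ b) (h₂ : b ≤ c),
    (map h₂).comp (map h₁) = map (h₁.trans h₂)

attribute [instance] PersMod.acg PersMod.mod

variable {k P : Type} [Field k] [PartialOrder P]

/-- Morphisms of persistence modules, as a `k`-submodule of the product of Hom-spaces. -/
def PersHomSub (M N : PersMod k P) :
    Submodule k (∀ a : P, M.V a →ₗ[k] N.V a) where
  carrier := {f | ∀ ⦃a b : P⦄ (h : a ≤ b), (N.map h).comp (f a) = (f b).comp (M.map h)}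
  add_mem' := by
    intro f g hf hg a b h
    simp only [Pi.add_apply, LinearMap.comp_add, LinearMap.add_comp, hf h, hg h]
  zero_mem' := by intro a b h; simp
  smul_mem' := by
    intro c f hf a b h
    simp only [Pi.smul_apply, LinearMap.comp_smul, LinearMap.smul_comp, hf h]

/-- The space of morphisms `M → N` of persistence modules. -/
def PersHom (M N : PersMod k P) : Type := ↥(PersHomSub M N)

noncomputable instance (M N : PersMod k P) : AddCommGroup (PersHom M N) :=
  inferInstanceAs (AddCommGroup ↥(PersHomSub M N))
noncomputable instance (M N : PersMod k P) : Module k (PersHom M N) :=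
  inferInstanceAs (Module k ↥(PersHomSub M N))

/-- Composition of morphisms of persistence modules. -/
def PersHom.comp {M N O : PersMod k P} (g : PersHom N O) (f : PersHom M N) :
    PersHom M O :=
  ⟨fun a => (g.1 a).comp (f.1 a), by
    intro a b h
    rw [← LinearMap.comp_assoc, g.2 h, LinearMap.comp_assoc, f.2 h, LinearMap.comp_assoc]⟩

def IsMonoP {M N : PersMod k P} (f : PersHom M N) : Prop :=
  ∀ a : P, Function.Injective (f.1 a)

def IsEpiP {M N : PersMod k P} (f : PersHom M N) : Prop :=
  ∀ a : P, Function.Surjective (f.1 a)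

def IsIsoP {M N : PersMod k P} (f : PersHom M N) : Prop :=
  ∀ a : P, Function.Bijective (f.1 a)

/-- Convexity of a subset of the poset. -/
def IsConvexSet (I : Set P) : Prop :=
  ∀ ⦃a b c : P⦄, a ∈ I → c ∈ I → a ≤ b → b ≤ c → b ∈ I

/-- Zigzag-connectivity of a subset of the poset. -/
def IsConnectedSet (I : Set P) : Prop :=
  I.Nonempty ∧ ∀ a ∈ I, ∀ b ∈ I,
    Relation.ReflTransGen (fun x y => x ∈ I ∧ y ∈ I ∧ (x ≤ y ∨ y ≤ x)) a b

/-- An interval of the poset: a connected convex subset. -/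
def IsIntervalSet (I : Set P) : Prop := IsConvexSet I ∧ IsConnectedSet I

/-- The underlying linear map of the interval module. -/
noncomputable def intervalMap (I : Set P) (a b : P) :
    ↥(if a ∈ I then (⊤ : Submodule k k) else ⊥) →ₗ[k]
      ↥(if b ∈ I then (⊤ : Submodule k k) else ⊥) where
  toFun v := ⟨if a ∈ I ∧ b ∈ I then (v : k) else 0, by
    by_cases hb : b ∈ I
    · simp [hb]
    · have hab : ¬(a ∈ I ∧ b ∈ I) := fun h' => hb h'.2
      rw [if_neg hb, if_neg hab]
      exact Submodule.zero_mem _⟩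
  map_add' v w := by
    apply Subtype.ext
    by_cases h' : a ∈ I ∧ b ∈ I <;> simp [h']
  map_smul' c v := by
    apply Subtype.ext
    by_cases h' : a ∈ I ∧ b ∈ I <;> simp [h']

@[simp] lemma intervalMap_coe (I : Set P) (a b : P)
    (v : ↥(if a ∈ I then (⊤ : Submodule k k) else ⊥)) :
    ((intervalMap I a b v : ↥(if b ∈ I then (⊤ : Submodule k k) else ⊥)) : k)
      = if a ∈ I ∧ b ∈ I then (v : k) else 0 := rfl

lemma intervalMem_zero {I : Set P} {a : P} (ha : a ∉ I)
    (v : ↥(if a ∈ I then (⊤ : Submodule k k) else ⊥)) : (v : k) = 0 := by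
  obtain ⟨x, hx⟩ := v
  rw [if_neg ha] at hx
  exact (Submodule.mem_bot k).mp hx

/-- The interval module `V_I` associated to a convex subset `I`. -/
noncomputable def intervalMod (I : Set P) (hI : IsConvexSet I) : PersMod k P where
  V a := ↥(if a ∈ I then (⊤ : Submodule k k) else ⊥)
  map {a b} _ := intervalMap I a b
  map_id a := by
    ext v
    rw [intervalMap_coe]
    by_cases ha : a ∈ I
    · simp [ha]
    · rw [if_neg (fun h => ha h.1), LinearMap.id_apply, intervalMem_zero ha v]
  map_comp {a b c} h₁ h₂ := by
    ext v
    rw [LinearMap.comp_apply, intervalMap_coe, intervalMap_coe, intervalMap_coe]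
    by_cases ha : a ∈ I <;> by_cases hb : b ∈ I <;> by_cases hc : c ∈ I <;>
      first
        | (exact absurd (hI ha hc h₁ h₂) hb)
        | simp [ha, hb, hc]

/-- Finite direct sums of persistence modules. -/
noncomputable def dSum {ι : Type} (M : ι → PersMod k P) : PersMod k P where
  V a := ∀ i, (M i).V a
  map {a b} h := LinearMap.pi fun i => ((M i).map h).comp (LinearMap.proj i)
  map_id a := by
    refine LinearMap.ext fun v => ?_
    funext i
    simp [LinearMap.pi_apply, (M i).map_id]
  map_comp {a b c} h₁ h₂ := by
    refine LinearMap.ext fun v => ?_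
    funext i
    simpa [LinearMap.pi_apply] using LinearMap.congr_fun ((M i).map_comp h₁ h₂) (v i)

/-- A persistence module is interval decomposable if it is isomorphic to a finite
direct sum of interval modules. -/
def IntervalDecomposable (W : PersMod k P) : Prop :=
  ∃ (n : ℕ) (J : Fin n → Set P) (hJ : ∀ i, IsIntervalSet (J i))
    (e : PersHom W (dSum fun i => intervalMod (J i) (hJ i).1)), IsIsoP e

/-- The combined morphism `⊕ᵢ Mᵢ → N` of a finite family of morphisms `Mᵢ → N`. -/
noncomputable def combineHom {ι : Type} [Fintype ι] {Mf : ι → PersMod k P}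
    {N : PersMod k P} (f : ∀ i, PersHom (Mf i) N) : PersHom (dSum Mf) N :=
  ⟨fun a => ∑ i, ((f i).1 a).comp (LinearMap.proj i), by
    intro a b h
    refine LinearMap.ext fun v => ?_
    simp only [LinearMap.comp_apply, LinearMap.sum_apply, LinearMap.proj_apply, map_sum]
    refine Finset.sum_congr rfl fun i _ => ?_
    have := LinearMap.congr_fun ((f i).2 h) (v i)
    exact this⟩

/-! `V_I` is `k` on `I` and `0` off it. An epimorphism `V_J → V_I` has a nonzero component at every
point of `I`, so `I ⊆ J`. If `a ≤ b` lie in `J` with `b ∈ I`, `a ∉ I`, then `f_b ∘ V_J(a ≤ b)`, a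
surjection since `V_J(a ≤ b)` is an isomorphism, equals `V_I(a ≤ b) ∘ f_a`, which factors through
`V_I(a) = 0`; so `V_I(b) = 0`, which is absurd. Conversely, when `I` is a down-set of `J` the
restriction `V_J → V_I` (identity on `I`, zero elsewhere) is natural and evidently surjective. -/

namespace IsEpiP

variable {M N : PersMod k P} {f : PersHom M N}

theorem subsingleton_of_map_surjective (hf : IsEpiP f) {a b : P} (hab : a ≤ b)
    (hM : Function.Surjective (M.map hab)) [Subsingleton (N.V a)] : Subsingleton (N.V b) := by
  have hcomp : Function.Surjective ((f.1 b).comp (M.map hab)) := (hf b).comp hM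
  rw [← f.2 hab, LinearMap.coe_comp] at hcomp
  exact hcomp.of_comp.subsingleton

end IsEpiP

namespace intervalMod

variable {I : Set P} (hI : IsConvexSet I)

theorem subsingleton_V {a : P} (ha : a ∉ I) :
    Subsingleton ((intervalMod I hI : PersMod k P).V a) :=
  ⟨fun v w => Subtype.ext ((intervalMem_zero ha v).trans (intervalMem_zero ha w).symm)⟩

theorem nontrivial_V {a : P} (ha : a ∈ I) :
    Nontrivial ((intervalMod I hI : PersMod k P).V a) :=
  ⟨⟨⟨1, by simp [ha]⟩, 0, fun h => one_ne_zero (congrArg Subtype.val h)⟩⟩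

theorem map_surjective {a b : P} (ha : a ∈ I) (hb : b ∈ I) (hab : a ≤ b) :
    Function.Surjective ((intervalMod I hI : PersMod k P).map hab) := fun ⟨x, _⟩ =>
  ⟨⟨x, by simp [ha]⟩, Subtype.ext (if_pos ⟨ha, hb⟩)⟩

end intervalMod

section Epimorphisms

variable {I J : Set P} {hI : IsConvexSet I} {hJ : IsConvexSet J}
  {f : PersHom (intervalMod J hJ) (intervalMod I hI : PersMod k P)}

theorem subset_of_isEpiP_intervalMod (hf : IsEpiP f) : I ⊆ J := fun a ha => by
  by_contra haJ
  have := intervalMod.nontrivial_V (k := k) hI ha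
  have := intervalMod.subsingleton_V (k := k) hJ haJ
  have := (hf a).nontrivial
  exact false_of_nontrivial_of_subsingleton ((intervalMod J hJ : PersMod k P).V a)

theorem mem_of_isEpiP_intervalMod (hf : IsEpiP f) {a b : P} (haJ : a ∈ J) (hbJ : b ∈ J)
    (hab : a ≤ b) (hbI : b ∈ I) : a ∈ I := by
  by_contra haI
  have := intervalMod.subsingleton_V (k := k) hI haI
  have := intervalMod.nontrivial_V (k := k) hI hbI
  have := hf.subsingleton_of_map_surjective hab (intervalMod.map_surjective hJ haJ hbJ hab)
  exact false_of_nontrivial_of_subsingleton ((intervalMod I hI : PersMod k P).V b)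

end Epimorphisms

noncomputable def intervalRestrictMap (I J : Set P) (a : P) :
    ↥(if a ∈ J then (⊤ : Submodule k k) else ⊥) →ₗ[k]
      ↥(if a ∈ I then (⊤ : Submodule k k) else ⊥) :=
  if ha : a ∈ I then Submodule.inclusion (by rw [if_pos ha]; exact le_top) else 0

section Restriction

variable {I J : Set P}

theorem intervalRestrictMap_coe (a : P) (v : ↥(if a ∈ J then (⊤ : Submodule k k) else ⊥)) :
    ((intervalRestrictMap I J a v : ↥(if a ∈ I then (⊤ : Submodule k k) else ⊥)) : k)
      = if a ∈ I then (v : k) else 0 := by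
  unfold intervalRestrictMap
  split_ifs <;> rfl

theorem intervalMap_comp_intervalRestrictMap (hIJ : I ⊆ J)
    (hdown : ∀ ⦃a b : P⦄, a ∈ J → b ∈ J → a ≤ b → b ∈ I → a ∈ I) {a b : P} (hab : a ≤ b) :
    (intervalMap I a b).comp (intervalRestrictMap I J a) =
      (intervalRestrictMap (k := k) I J b).comp (intervalMap J a b) := by
  refine LinearMap.ext fun v => Subtype.ext ?_
  rw [LinearMap.comp_apply, LinearMap.comp_apply, intervalMap_coe, intervalRestrictMap_coe,
    intervalRestrictMap_coe, intervalMap_coe]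
  by_cases haJ : a ∈ J
  · by_cases hbI : b ∈ I
    · simp [hbI, hIJ hbI, haJ, hdown haJ (hIJ hbI) hab hbI]
    · simp [hbI]
  · simp [intervalMem_zero haJ v]

noncomputable def intervalRestrict (hI : IsConvexSet I) (hJ : IsConvexSet J) (hIJ : I ⊆ J)
    (hdown : ∀ ⦃a b : P⦄, a ∈ J → b ∈ J → a ≤ b → b ∈ I → a ∈ I) :
    PersHom (intervalMod J hJ) (intervalMod I hI : PersMod k P) :=
  ⟨intervalRestrictMap I J, fun _ _ => intervalMap_comp_intervalRestrictMap hIJ hdown⟩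

theorem intervalRestrict_isEpiP (hI : IsConvexSet I) (hJ : IsConvexSet J) (hIJ : I ⊆ J)
    (hdown : ∀ ⦃a b : P⦄, a ∈ J → b ∈ J → a ≤ b → b ∈ I → a ∈ I) :
    IsEpiP (intervalRestrict (k := k) hI hJ hIJ hdown) := by
  intro a
  by_cases ha : a ∈ I
  · rintro ⟨x, _⟩
    exact ⟨⟨x, by simp [hIJ ha]⟩, Subtype.ext ((intervalRestrictMap_coe a _).trans (if_pos ha))⟩
  · have := intervalMod.subsingleton_V (k := k) hI ha
    exact fun _ => ⟨0, Subsingleton.elim _ _⟩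

end Restriction

theorem epi_between_interval_modules_iff_downset_general
    {k P : Type} [Field k] [PartialOrder P]
    (I J : Set P) (hI : IsIntervalSet I) (hJ : IsIntervalSet J) :
    (∃ f : PersHom (intervalMod J hJ.1) (intervalMod I hI.1 : PersMod k P), IsEpiP f) ↔
      (I ⊆ J ∧ ∀ ⦃a b : P⦄, a ∈ J → b ∈ J → a ≤ b → b ∈ I → a ∈ I) := by
  constructor
  · rintro ⟨f, hf⟩
    exact ⟨subset_of_isEpiP_intervalMod hf, fun a b => mem_of_isEpiP_intervalMod hf⟩
  · rintro ⟨hIJ, hdown⟩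
    exact ⟨intervalRestrict hI.1 hJ.1 hIJ hdown, intervalRestrict_isEpiP hI.1 hJ.1 hIJ hdown⟩

/-- For intervals `I, J` of the poset, there exists an epimorphism of
modules `V_J → V_I` iff `I` is a down-set in `J`. -/
theorem epi_between_interval_modules_iff_downset
    {k P : Type} [Field k] [PartialOrder P] [Fintype P]
    (I J : Set P) (hI : IsIntervalSet I) (hJ : IsIntervalSet J) :
    (∃ f : PersHom (intervalMod J hJ.1) (intervalMod I hI.1 : PersMod k P), IsEpiP f) ↔
      (I ⊆ J ∧ ∀ ⦃a b : P⦄, a ∈ J → b ∈ J → a ≤ b → b ∈ I → a ∈ I) :=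
  epi_between_interval_modules_iff_downset_general I J hI hJ
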